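/- Let S ∈ R^{n×n} with induced ∞-norm ‖S‖_∞, X ∈ R^{n×d}, and consider the L-layer linear GCN node-level function class F = {i ↦ (S^L X W)_i β : ‖W‖ ≤ 1, ‖β‖₂ ≤ B} (norms on W bounded appropriately). Then for every node i and every f ∈ F, |f(i)| ≤ B ‖S‖_∞^{L−1} ‖S X‖_{2→∞}, where ‖M‖_{2→∞} = max_i ‖M_i‖₂ is the maximum row Euclidean norm. -/

import Mathlib

/-!
Each row of `S M` is a combination of the rows of `M` with coefficients of total absolute
value at most `‖S‖_∞`, so `‖S M‖_{2→∞} ≤ ‖S‖_∞ ‖M‖_{2→∞}`; iterating on `S^L X = S^(L-1) (S X)`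
bounds the rows of `S^L X`. Right multiplication by the contraction `W` does not increase the
row norms, and Cauchy–Schwarz against `β` gives the factor `B`.
-/

/-- The induced `∞`-norm (maximum absolute row sum) of a matrix. -/
noncomputable def matrixInfNorm {n m : ℕ} (M : Matrix (Fin n) (Fin m) ℝ) : ℝ :=
  ⨆ i, ∑ j, |M i j|

/-- The `2→∞` norm of a matrix: the maximum Euclidean norm of a row. -/
noncomputable def matrixTwoInfNorm {n m : ℕ} (M : Matrix (Fin n) (Fin m) ℝ) : ℝ :=
  ⨆ i, Real.sqrt (∑ j, (M i j) ^ 2)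

open Matrix WithLp

noncomputable def euclidNorm {ι : Type*} [Fintype ι] (v : ι → ℝ) : ℝ :=
  √(∑ k, v k ^ 2)

section euclidNorm

variable {ι κ : Type*} [Fintype ι] [Fintype κ]

theorem euclidNorm_eq_norm_toLp (v : ι → ℝ) : euclidNorm v = ‖toLp 2 v‖ := by
  simp [euclidNorm, EuclideanSpace.norm_eq]

theorem euclidNorm_nonneg (v : ι → ℝ) : 0 ≤ euclidNorm v := Real.sqrt_nonneg _

theorem abs_dotProduct_le_euclidNorm_mul (v w : ι → ℝ) :
    |v ⬝ᵥ w| ≤ euclidNorm v * euclidNorm w := by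
  rw [euclidNorm_eq_norm_toLp, euclidNorm_eq_norm_toLp]
  simpa [EuclideanSpace.inner_toLp_toLp, dotProduct_comm] using
    abs_real_inner_le_norm (toLp 2 v) (toLp 2 w)

theorem euclidNorm_sum_smul_le (a : κ → ℝ) (v : κ → ι → ℝ) :
    euclidNorm (∑ j, a j • v j) ≤ ∑ j, |a j| * euclidNorm (v j) := by
  simp only [euclidNorm_eq_norm_toLp, toLp_sum, toLp_smul]
  refine (norm_sum_le _ _).trans_eq (Finset.sum_congr rfl fun j _ => ?_)
  rw [norm_smul, Real.norm_eq_abs]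

theorem euclidNorm_vecMul_le (a : κ → ℝ) (M : Matrix κ ι ℝ) :
    euclidNorm (a ᵥ* M) ≤ ∑ j, |a j| * euclidNorm (M j) := by
  rw [vecMul_eq_sum]
  exact euclidNorm_sum_smul_le a M

end euclidNorm

section matrixNorms

variable {n m : ℕ}

theorem sum_abs_le_matrixInfNorm (S : Matrix (Fin n) (Fin m) ℝ) (i : Fin n) :
    ∑ j, |S i j| ≤ matrixInfNorm S :=
  le_ciSup (f := fun i => ∑ j, |S i j|) (Set.finite_range _).bddAbove i

theorem matrixInfNorm_nonneg (S : Matrix (Fin n) (Fin m) ℝ) : 0 ≤ matrixInfNorm S :=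
  Real.iSup_nonneg fun _ => Finset.sum_nonneg fun _ _ => abs_nonneg _

theorem euclidNorm_row_le_matrixTwoInfNorm (M : Matrix (Fin n) (Fin m) ℝ) (i : Fin n) :
    euclidNorm (M i) ≤ matrixTwoInfNorm M :=
  le_ciSup (f := fun i => √(∑ j, M i j ^ 2)) (Set.finite_range _).bddAbove i

theorem matrixTwoInfNorm_nonneg (M : Matrix (Fin n) (Fin m) ℝ) : 0 ≤ matrixTwoInfNorm M :=
  Real.iSup_nonneg fun _ => Real.sqrt_nonneg _

theorem matrixTwoInfNorm_le_of_forall_row_le {M : Matrix (Fin n) (Fin m) ℝ} {c : ℝ}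
    (hM : ∀ i, euclidNorm (M i) ≤ c) (hc : 0 ≤ c) : matrixTwoInfNorm M ≤ c :=
  Real.iSup_le hM hc

theorem matrixTwoInfNorm_mul_le {k : ℕ} (S : Matrix (Fin n) (Fin k) ℝ)
    (M : Matrix (Fin k) (Fin m) ℝ) :
    matrixTwoInfNorm (S * M) ≤ matrixInfNorm S * matrixTwoInfNorm M := by
  have hM := matrixTwoInfNorm_nonneg M
  refine matrixTwoInfNorm_le_of_forall_row_le (fun i => ?_)
    (mul_nonneg (matrixInfNorm_nonneg S) hM)
  calc euclidNorm ((S * M) i)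
      ≤ ∑ j, |S i j| * euclidNorm (M j) := euclidNorm_vecMul_le (S i) M
    _ ≤ ∑ j, |S i j| * matrixTwoInfNorm M := by
        gcongr with j
        exact euclidNorm_row_le_matrixTwoInfNorm M j
    _ = (∑ j, |S i j|) * matrixTwoInfNorm M := (Finset.sum_mul ..).symm
    _ ≤ matrixInfNorm S * matrixTwoInfNorm M := by
        gcongr
        exact sum_abs_le_matrixInfNorm S i

theorem matrixTwoInfNorm_pow_mul_le (S : Matrix (Fin n) (Fin n) ℝ)
    (M : Matrix (Fin n) (Fin m) ℝ) (p : ℕ) :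
    matrixTwoInfNorm (S ^ p * M) ≤ matrixInfNorm S ^ p * matrixTwoInfNorm M := by
  induction p with
  | zero => simp
  | succ p ih =>
    calc matrixTwoInfNorm (S ^ (p + 1) * M)
        = matrixTwoInfNorm (S * (S ^ p * M)) := by rw [pow_succ', Matrix.mul_assoc]
      _ ≤ matrixInfNorm S * matrixTwoInfNorm (S ^ p * M) := matrixTwoInfNorm_mul_le S _
      _ ≤ matrixInfNorm S * (matrixInfNorm S ^ p * matrixTwoInfNorm M) := by
          gcongr
          exact matrixInfNorm_nonneg S
      _ = matrixInfNorm S ^ (p + 1) * matrixTwoInfNorm M := by ring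

theorem matrixTwoInfNorm_mul_le_of_contraction {k : ℕ} (M : Matrix (Fin n) (Fin k) ℝ)
    {W : Matrix (Fin k) (Fin m) ℝ} (hW : ∀ v, euclidNorm (v ᵥ* W) ≤ euclidNorm v) :
    matrixTwoInfNorm (M * W) ≤ matrixTwoInfNorm M :=
  matrixTwoInfNorm_le_of_forall_row_le
    (fun i => (hW (M i)).trans (euclidNorm_row_le_matrixTwoInfNorm M i))
    (matrixTwoInfNorm_nonneg M)

end matrixNorms

theorem linearGCN_output_bound_general
    {n d : ℕ} (L : ℕ) (hL : 1 ≤ L)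
    (S : Matrix (Fin n) (Fin n) ℝ) (X : Matrix (Fin n) (Fin d) ℝ)
    (W : Matrix (Fin d) (Fin d) ℝ)
    (hW : ∀ v : Fin d → ℝ,
      Real.sqrt (∑ k, (Matrix.vecMul v W k) ^ 2) ≤ Real.sqrt (∑ k, (v k) ^ 2))
    (B : ℝ)
    (β : Fin d → ℝ) (hβ : Real.sqrt (∑ k, (β k) ^ 2) ≤ B) :
    ∀ i, |∑ k, (S ^ L * X * W) i k * β k| ≤
      B * matrixInfNorm S ^ (L - 1) * matrixTwoInfNorm (S * X) := by
  intro i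
  have hSLX : S ^ L * X = S ^ (L - 1) * (S * X) := by
    rw [← Matrix.mul_assoc, ← pow_succ, Nat.sub_add_cancel hL]
  have hrows : matrixTwoInfNorm (S ^ L * X * W) ≤
      matrixInfNorm S ^ (L - 1) * matrixTwoInfNorm (S * X) :=
    (matrixTwoInfNorm_mul_le_of_contraction _ hW).trans
      (hSLX ▸ matrixTwoInfNorm_pow_mul_le S (S * X) (L - 1))
  calc |∑ k, (S ^ L * X * W) i k * β k|
      ≤ euclidNorm ((S ^ L * X * W) i) * euclidNorm β := abs_dotProduct_le_euclidNorm_mul _ _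
    _ ≤ matrixTwoInfNorm (S ^ L * X * W) * B :=
        mul_le_mul (euclidNorm_row_le_matrixTwoInfNorm _ i) hβ (euclidNorm_nonneg β)
          (matrixTwoInfNorm_nonneg _)
    _ ≤ matrixInfNorm S ^ (L - 1) * matrixTwoInfNorm (S * X) * B := by
        gcongr
        exact (euclidNorm_nonneg β).trans hβ
    _ = B * matrixInfNorm S ^ (L - 1) * matrixTwoInfNorm (S * X) := by ring

/-- Uniform bound on the outputs of an `L`-layer linear GCN node-level predictor
`f(i) = (S^L X W)_i β` with spectral norm of `W` at most 1 and `‖β‖₂ ≤ B`: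
`|f(i)| ≤ B ‖S‖_∞^{L-1} ‖SX‖_{2→∞}`. -/
theorem linearGCN_output_bound
    {n d : ℕ} (hn : 0 < n) (L : ℕ) (hL : 1 ≤ L)
    (S : Matrix (Fin n) (Fin n) ℝ) (X : Matrix (Fin n) (Fin d) ℝ)
    (W : Matrix (Fin d) (Fin d) ℝ)
    (hW : ∀ v : Fin d → ℝ,
      Real.sqrt (∑ k, (Matrix.vecMul v W k) ^ 2) ≤ Real.sqrt (∑ k, (v k) ^ 2))
    (B : ℝ) (hB : 0 ≤ B)
    (β : Fin d → ℝ) (hβ : Real.sqrt (∑ k, (β k) ^ 2) ≤ B) :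
    ∀ i, |∑ k, (S ^ L * X * W) i k * β k| ≤
      B * matrixInfNorm S ^ (L - 1) * matrixTwoInfNorm (S * X) :=
  linearGCN_output_bound_general L hL S X W hW B β hβ
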